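/- One has lim_{τ→0⁺} exp( φ(q₂(τ),τ) − πi·(1/τ − 1/8) ) = 1; equivalently, e^{φ(q₂(τ),τ)} = exp(πi(1/τ − 1/8))·E(τ) with E(τ) → 1 as τ → 0⁺. -/

import Mathlib

open Real Complex Filter

noncomputable def Ppoly (τ : ℝ) (z : ℂ) : ℂ :=
  z ^ 3 + (Complex.I - 1 / (4 * (π : ℂ)) - Complex.I / (τ : ℂ) ^ 2) * z ^ 2
    - z / 4 - Complex.I / 4

noncomputable def phi (τ : ℝ) (z : ℂ) : ℂ :=
  -(π : ℂ) * z - (π : ℂ) / (4 * z) +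
    ((1 / 2 + 2 * (π : ℂ) * Complex.I / (τ : ℂ) ^ 2) / 2) *
      Complex.log (1 - Complex.I * z)

/-
Write z₀ = iτ/2. Multiplying P(z, τ) = 0 by iτ² gives (z - z₀)(z + z₀) = τ² · O(τ), so the
root satisfies q₂ - z₀ = O(τ²). With Log(1 - iz) = -iz + z²/2 + O(z³), the exponent
φ - πi(1/τ - 1/8) is, up to O(τ) terms, f(z) - f(z₀) for f(z) = -π/(4z) + πz/τ² + πiz²/(2τ²),
and f(z₀) = πi(1/τ - 1/8). Because 2z₀ = iτ, the derivative f'(z₀) = -π/(2τ) is only of size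
1/τ, so the O(τ²) accuracy of the root already makes f(z) - f(z₀) = O(τ).
-/

lemma Complex.norm_log_one_add_sub_sub_sq_le {w : ℂ} (hw : ‖w‖ ≤ 1 / 2) :
    ‖Complex.log (1 + w) - (w - w ^ 2 / 2)‖ ≤ 2 / 3 * ‖w‖ ^ 3 := by
  have h := norm_log_sub_logTaylor_le 2 (hw.trans_lt one_half_lt_one)
  have hT : logTaylor 3 w = w - w ^ 2 / 2 := by
    norm_num [logTaylor, Finset.sum_range_succ]
    ring
  have hinv : (1 - ‖w‖)⁻¹ ≤ 2 := by
    rw [inv_le_comm₀ (by linarith) two_pos]; linarith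
  rw [hT] at h
  calc _ ≤ ‖w‖ ^ 3 * (1 - ‖w‖)⁻¹ / 3 := by exact_mod_cast h
    _ ≤ ‖w‖ ^ 3 * 2 / 3 := by gcongr
    _ = 2 / 3 * ‖w‖ ^ 3 := by ring

lemma I_mul_sq_mul_Ppoly {τ : ℝ} (hτ : τ ≠ 0) (z : ℂ) :
    I * τ ^ 2 * Ppoly τ z = (z - I * τ / 2) * (z + I * τ / 2) -
      τ ^ 2 * (I * z / 4 + (1 + I / (4 * π)) * z ^ 2 - I * z ^ 3) := by
  have hτ' : (τ : ℂ) ≠ 0 := ofReal_ne_zero.mpr hτ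
  have hπ : (π : ℂ) ≠ 0 := ofReal_ne_zero.mpr pi_ne_zero
  rw [Ppoly]
  field_simp
  linear_combination (16 * z ^ 2 * π * (τ ^ 2 - 1)) * I_sq

lemma norm_bounds_of_norm_sub_lt {τ : ℝ} (hτ : 0 < τ) {z : ℂ} (hz : ‖z - I * τ / 2‖ < τ / 10) :
    2 * τ / 5 ≤ ‖z‖ ∧ ‖z‖ ≤ 3 * τ / 5 ∧ 9 * τ / 10 ≤ ‖z + I * τ / 2‖ ∧
      ‖z + I * τ / 2‖ ≤ 11 * τ / 10 := by
  have h2 : ‖I * τ / 2‖ = τ / 2 := by simp [abs_of_pos hτ]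
  have h3 : ‖(z + I * τ / 2) - (z - I * τ / 2)‖ = τ := by
    rw [show (z + I * τ / 2) - (z - I * τ / 2) = 2 * (I * τ / 2) by ring, norm_mul, h2]
    norm_num
    ring
  refine ⟨?_, ?_, ?_, ?_⟩
  · linarith [norm_le_norm_add_norm_sub' (I * τ / 2) z, norm_sub_rev (I * τ / 2) z]
  · linarith [norm_le_norm_add_norm_sub' z (I * τ / 2)]
  · linarith [norm_sub_le (z + I * τ / 2) (z - I * τ / 2)]
  · linarith [norm_sub_norm_le (z + I * τ / 2) (z - I * τ / 2)]

lemma norm_one_add_I_div_four_pi_le : ‖(1 : ℂ) + I / (4 * π)‖ ≤ 2 := by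
  have h : ‖I / (4 * (π : ℂ))‖ ≤ 1 := by
    rw [norm_div, norm_I, norm_mul, norm_real, Real.norm_of_nonneg pi_pos.le, RCLike.norm_ofNat,
      div_le_one₀ (by positivity)]
    linarith [pi_gt_three]
  linarith [norm_add_le (1 : ℂ) (I / (4 * π)), norm_one (α := ℂ)]

lemma norm_sub_le_of_Ppoly_eq_zero {τ : ℝ} (hτ : 0 < τ) (hτ4 : τ ≤ 1 / 4) {z : ℂ}
    (hz : ‖z - I * τ / 2‖ < τ / 10) (hP : Ppoly τ z = 0) : ‖z - I * τ / 2‖ ≤ τ ^ 2 / 2 := by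
  obtain ⟨-, hz_le, hzz0, -⟩ := norm_bounds_of_norm_sub_lt hτ hz
  have hfac := I_mul_sq_mul_Ppoly hτ.ne' z
  rw [hP, mul_zero, eq_comm, sub_eq_zero] at hfac
  have hX : ‖I * z / 4 + (1 + I / (4 * π)) * z ^ 2 - I * z ^ 3‖ ≤ 7 / 20 * τ := by
    have hc := norm_one_add_I_div_four_pi_le
    calc _ ≤ ‖I * z / 4‖ + ‖(1 + I / (4 * π)) * z ^ 2‖ + ‖I * z ^ 3‖ :=
          norm_sub_le_of_le (norm_add_le _ _) le_rfl
      _ ≤ ‖z‖ / 4 + 2 * ‖z‖ ^ 2 + ‖z‖ ^ 3 := by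
        simp only [norm_mul, norm_div, norm_I, norm_pow, one_mul]
        gcongr
        norm_num
      _ ≤ 7 / 20 * τ := by nlinarith [norm_nonneg z]
  have := congrArg norm hfac
  rw [norm_mul, norm_mul, norm_pow, norm_real, Real.norm_of_nonneg hτ.le] at this
  nlinarith [norm_nonneg (z - I * τ / 2)]

lemma phi_sub_eq {τ : ℝ} (hτ : τ ≠ 0) {z : ℂ} (hz : z ≠ 0) :
    phi τ z - π * I * (1 / τ - 1 / 8) =
      -π * z
        + π * (z - I * τ / 2) * (2 * (z - I * τ / 2) + I * z * (z + I * τ / 2)) / (2 * τ ^ 2 * z)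
        + Complex.log (1 - I * z) / 4
        + π * I / τ ^ 2 * (Complex.log (1 - I * z) - (-(I * z) - (-(I * z)) ^ 2 / 2)) := by
  have hτ' : (τ : ℂ) ≠ 0 := ofReal_ne_zero.mpr hτ
  rw [phi]
  field_simp
  linear_combination
    (32 * π * z * τ ^ 2 * I - 128 * π * z ^ 3 * I - 256 * π * z ^ 2 - 64 * π * τ ^ 2) * I_sq

lemma norm_phi_sub_le {τ : ℝ} (hτ : 0 < τ) (hτ4 : τ ≤ 1 / 4) {z : ℂ}
    (hz : ‖z - I * τ / 2‖ < τ / 10) (hP : Ppoly τ z = 0) :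
    ‖phi τ z - π * I * (1 / τ - 1 / 8)‖ ≤ 9 * τ := by
  obtain ⟨hz_ge, hz_le, -, hzz0⟩ := norm_bounds_of_norm_sub_lt hτ hz
  have hδ := norm_sub_le_of_Ppoly_eq_zero hτ hτ4 hz hP
  have hz0 : z ≠ 0 := norm_pos_iff.mp (by linarith)
  have hπ := pi_le_four
  have hτn : ‖(τ : ℂ)‖ = τ := by simp [abs_of_pos hτ]
  have hw : ‖-(I * z)‖ = ‖z‖ := by simp
  have hw2 : ‖-(I * z)‖ ≤ 1 / 2 := by linarith
  rw [phi_sub_eq hτ.ne' hz0, sub_eq_add_neg (1 : ℂ)]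
  set δ := z - I * τ / 2
  have hmain : ‖π * δ * (2 * δ + I * z * (z + I * τ / 2)) / (2 * τ ^ 2 * z)‖ ≤ 5 * τ := by
    have hN : ‖2 * δ + I * z * (z + I * τ / 2)‖ ≤ 2 * τ ^ 2 := by
      calc _ ≤ 2 * ‖δ‖ + ‖z‖ * ‖z + I * τ / 2‖ := by
            simpa using norm_add_le (2 * δ) (I * z * (z + I * τ / 2))
        _ ≤ 2 * (τ ^ 2 / 2) + 3 * τ / 5 * (11 * τ / 10) := by gcongr
        _ ≤ 2 * τ ^ 2 := by nlinarith
    simp only [norm_div, norm_mul, norm_real, Real.norm_of_nonneg pi_pos.le, norm_pow, hτn,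
      RCLike.norm_ofNat]
    rw [div_le_iff₀ (by positivity)]
    calc π * ‖δ‖ * ‖2 * δ + I * z * (z + I * τ / 2)‖ ≤ 4 * (τ ^ 2 / 2) * (2 * τ ^ 2) := by gcongr
      _ = 5 * τ * (2 * τ ^ 2 * (2 * τ / 5)) := by ring
      _ ≤ 5 * τ * (2 * τ ^ 2 * ‖z‖) := by gcongr
  have hlin : ‖-(π : ℂ) * z‖ ≤ 12 * τ / 5 := by
    rw [norm_mul, norm_neg, norm_real, Real.norm_of_nonneg pi_pos.le]
    nlinarith [norm_nonneg z]
  have hlog : ‖Complex.log (1 + -(I * z)) / 4‖ ≤ 9 * τ / 40 := by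
    rw [norm_div, RCLike.norm_ofNat]
    linarith [norm_log_one_add_half_le_self hw2]
  have hrem : ‖π * I / τ ^ 2 * (Complex.log (1 + -(I * z)) - (-(I * z) - (-(I * z)) ^ 2 / 2))‖
      ≤ 3 * τ / 5 := by
    have hR := norm_log_one_add_sub_sub_sq_le hw2
    rw [hw] at hR
    rw [norm_mul, norm_div, norm_mul, norm_real, Real.norm_of_nonneg pi_pos.le, norm_I, norm_pow,
      hτn, div_mul_eq_mul_div, div_le_iff₀ (by positivity)]
    calc _ ≤ π * 1 * (2 / 3 * ‖z‖ ^ 3) := by gcongr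
      _ ≤ 4 * 1 * (2 / 3 * (3 * τ / 5) ^ 3) := by gcongr
      _ ≤ 3 * τ / 5 * τ ^ 2 := by nlinarith [pow_pos hτ 3]
  calc _ ≤ _ := norm_add₄_le
    _ ≤ 12 * τ / 5 + 5 * τ + 9 * τ / 40 + 3 * τ / 5 := by gcongr
    _ ≤ 9 * τ := by linarith

theorem statement13 (q₂ : ℝ → ℂ)
    (hq₂ : ∀ τ : ℝ, 0 < τ → τ ≤ 1 / 4 →
      ‖q₂ τ - Complex.I * (τ : ℂ) / 2‖ < τ / 10 ∧ Ppoly τ (q₂ τ) = 0) :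
    Tendsto
      (fun τ : ℝ => Complex.exp (phi τ (q₂ τ) -
        (π : ℂ) * Complex.I * (1 / (τ : ℂ) - 1 / 8)))
      (nhdsWithin 0 (Set.Ioi 0)) (nhds 1) := by
  have hbound : ∀ᶠ τ in nhdsWithin 0 (Set.Ioi 0),
      ‖phi τ (q₂ τ) - π * I * (1 / τ - 1 / 8)‖ ≤ 9 * τ := by
    filter_upwards [Ioc_mem_nhdsGT (show (0 : ℝ) < 1 / 4 by norm_num)] with τ ⟨hτ, hτ4⟩
    exact norm_phi_sub_le hτ hτ4 (hq₂ τ hτ hτ4).1 (hq₂ τ hτ hτ4).2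
  have hlin : Tendsto (fun τ : ℝ => 9 * τ) (nhdsWithin 0 (Set.Ioi 0)) (nhds 0) := by
    simpa using ((continuous_const_mul (9 : ℝ)).tendsto 0).mono_left nhdsWithin_le_nhds
  have h := (Complex.continuous_exp.tendsto 0).comp (squeeze_zero_norm' hbound hlin)
  rwa [Complex.exp_zero] at h
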